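/- The Teia potential is nonnegative: let (M,d) be a metric space, k ≥ 1, let s_1,…,s_k and a_1,…,a_k be points of M with s_j = a_j for every j ≠ 1, and let E_1,…,E_k ∈ ℝ. Then Φ(s,a,E) ≥ 0. -/

import Mathlib

/-!
Only the first server contributes to the isolation sums, so `ε^i = α(s₁; a₁, s_i)`, and the
triangle inequality gives `2ε^i ≤ d(s₁,a₁) + d(s₁,s_i)`. Since `e_max ≥ e_i`, the last term of
`Φ` is at least `-2 Σ_i ε^i ≥ -k·d(s₁,a₁) - Σ_i d(s₁,s_i)`; the first of these is cancelled by the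
movement term `k·Σ_i d(s_i,a_i) = k·d(s₁,a₁)`, the second by the pairs `{s₁, s_i}` of the
pairwise-distance term.
-/

/-- The isolation index `α(p; q, r) = (d(p,q) + d(p,r) − d(q,r)) / 2`. -/
noncomputable def alpha {M : Type*} [MetricSpace M] (p q r : M) : ℝ :=
  (dist p q + dist p r - dist q r) / 2

/-- The Teia potential `Φ(s, a, E)`:
`Σ_{i<j} d(s_i,s_j) + k·Σ_i d(s_i,a_i) + 2·Σ_i (e_max − E_i)`,
where `ε^i = Σ_j α(s_j; a_j, s_i)`, `e_i = E_i − ε^i`, and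
`e_max = max_i e_i`. -/
noncomputable def teiaPhi {M : Type*} [MetricSpace M] {k : ℕ}
    (s a : Fin k → M) (E : Fin k → ℝ) : ℝ :=
  (∑ i : Fin k, ∑ j ∈ Finset.Ioi i, dist (s i) (s j))
    + k * ∑ i : Fin k, dist (s i) (a i)
    + 2 * ∑ i : Fin k,
        ((⨆ j : Fin k, (E j - ∑ l : Fin k, alpha (s l) (a l) (s j))) - E i)

open Finset

section Metric

variable {M : Type*} [MetricSpace M]

lemma alpha_self_left (p r : M) : alpha p p r = 0 := by
  simp [alpha]

lemma two_mul_alpha_le (p q r : M) : 2 * alpha p q r ≤ dist p q + dist p r := by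
  have := dist_nonneg (x := q) (y := r)
  rw [alpha]
  linarith

lemma sum_alpha_eq_of_eq_off {ι : Type*} [Fintype ι] {s a : ι → M} {i₀ : ι}
    (h : ∀ j, j ≠ i₀ → s j = a j) (x : M) :
    ∑ l, alpha (s l) (a l) x = alpha (s i₀) (a i₀) x :=
  sum_eq_single i₀ (fun l _ hl => by rw [h l hl, alpha_self_left]) (by simp)

lemma sum_dist_eq_of_eq_off {ι : Type*} [Fintype ι] {s a : ι → M} {i₀ : ι}
    (h : ∀ j, j ≠ i₀ → s j = a j) :
    ∑ i, dist (s i) (a i) = dist (s i₀) (a i₀) :=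
  sum_eq_single i₀ (fun l _ hl => by rw [h l hl, dist_self]) (by simp)

lemma two_mul_sum_alpha_le {ι : Type*} [Fintype ι] (p q : M) (s : ι → M) :
    2 * ∑ i, alpha p q (s i) ≤ Fintype.card ι * dist p q + ∑ i, dist p (s i) := by
  calc 2 * ∑ i, alpha p q (s i) ≤ ∑ i, (dist p q + dist p (s i)) := by
        rw [mul_sum]
        exact sum_le_sum fun i _ => two_mul_alpha_le p q (s i)
    _ = Fintype.card ι * dist p q + ∑ i, dist p (s i) := by
        rw [sum_add_distrib, sum_const, card_univ, nsmul_eq_mul]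

lemma sum_dist_le_sum_Ioi_dist {ι : Type*} [Fintype ι] [LinearOrder ι]
    [LocallyFiniteOrderTop ι] (s : ι → M) {z : ι} (hz : IsBot z) :
    ∑ j, dist (s z) (s j) ≤ ∑ i, ∑ j ∈ Ioi i, dist (s i) (s j) := by
  have hIci : Ici z = univ := eq_univ_of_forall fun j => mem_Ici.2 (hz j)
  calc ∑ j, dist (s z) (s j) = ∑ j ∈ Ioi z, dist (s z) (s j) := by
        rw [← hIci, Ici_eq_cons_Ioi, sum_cons, dist_self, zero_add]
    _ ≤ ∑ i, ∑ j ∈ Ioi i, dist (s i) (s j) :=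
        single_le_sum (f := fun i => ∑ j ∈ Ioi i, dist (s i) (s j))
          (fun i _ => sum_nonneg fun j _ => dist_nonneg) (mem_univ z)

end Metric

lemma neg_sum_le_sum_ciSup_sub {ι : Type*} [Fintype ι] (E ε : ι → ℝ) :
    -∑ i, ε i ≤ ∑ i, ((⨆ j, (E j - ε j)) - E i) := by
  rw [← sum_neg_distrib]
  refine sum_le_sum fun i _ => ?_
  have := le_ciSup (Finite.bddAbove_range fun j => E j - ε j) i
  linarith

/-- The Teia potential is nonnegative whenever at most one server is open,
i.e. `s_j = a_j` for every index other than the first. -/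
theorem teiaPhi_nonneg {M : Type*} [MetricSpace M] {k : ℕ} (hk : 1 ≤ k)
    (s a : Fin k → M) (E : Fin k → ℝ)
    (h : ∀ j : Fin k, j ≠ ⟨0, hk⟩ → s j = a j) :
    0 ≤ teiaPhi s a E := by
  set z : Fin k := ⟨0, hk⟩
  have hz : IsBot z := fun j => Fin.le_iff_val_le_val.2 (Nat.zero_le _)
  have hpairs := sum_dist_le_sum_Ioi_dist s hz
  have hα := two_mul_sum_alpha_le (s z) (a z) s
  have hsup := neg_sum_le_sum_ciSup_sub E fun j => alpha (s z) (a z) (s j)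
  rw [Fintype.card_fin] at hα
  rw [teiaPhi, sum_dist_eq_of_eq_off h]
  simp only [sum_alpha_eq_of_eq_off h]
  linarith
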